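/- Let ⟨e_α^m : α < λ, m < ω⟩ be a generalized C-sequence, i.e., each e_α^m is club in α (for limit α) and e_α^m ⊆ e_α^{m+1}. For fixed α < β < λ, there exists m₀ < ω such that for all m ≥ m₀, the m-walk from β to α equals the m₀-walk from β to α: ρ₂^m(α,β) = ρ₂^{m₀}(α,β) and β_i^m(α,β) = β_i^{m₀}(α,β) for all i ≤ ρ₂^m(α,β). -/

import Mathlib

/-!
At every node `γ` the `m`-step `min (e^m_γ \ α)` can only decrease as the clubs grow with `m`,
so it is eventually constant. It lies strictly below a nonzero node (also when `e^m_γ \ α` is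
empty: then `sInf ∅ = 0`), so induction on the starting point shows that the whole walk is
eventually constant in `m`.
-/

/-- `E` is a closed unbounded subset of (the ordinals below) `β`. -/
def IsClubIn (E : Set Ordinal) (β : Ordinal) : Prop :=
  E ⊆ Set.Iio β ∧ (∀ a < β, ∃ b ∈ E, a ≤ b) ∧
    (∀ a < β, a ≠ 0 → sSup (E ∩ Set.Iio a) = a → a ∈ E)

/-- The minimal walk from `β` towards `α` along the C-sequence `e`. -/
noncomputable def walk (e : Ordinal → Set Ordinal) (α β : Ordinal) : ℕ → Ordinal
  | 0 => β
  | n + 1 => sInf (e (walk e α β n) ∩ Set.Ici α)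

open Filter Set

theorem Monotone.eventually_sInf_eq_sInf_iUnion {ι α : Type*} [Preorder ι]
    [ConditionallyCompleteLinearOrderBot α] [WellFoundedLT α] {S : ι → Set α} (hS : Monotone S) :
    ∀ᶠ i in atTop, sInf (S i) = sInf (⋃ i, S i) := by
  rcases (⋃ i, S i).eq_empty_or_nonempty with hempty | hne
  · refine .of_forall fun i => ?_
    rw [hempty, iUnion_eq_empty.1 hempty i]
  · obtain ⟨i₀, hi₀⟩ := mem_iUnion.1 (csInf_mem hne)
    filter_upwards [eventually_ge_atTop i₀] with i hi
    exact le_antisymm (csInf_le' (hS hi hi₀)) (csInf_le_csInf' ⟨_, hS hi hi₀⟩ (subset_iUnion S i))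

theorem subset_Iio_of_isClubIn {c : Ordinal → Set Ordinal} {B : Ordinal} (h0 : c 0 = ∅)
    (hsucc : ∀ β : Ordinal, c (β + 1) = {β})
    (hlim : ∀ β < B, Order.IsSuccLimit β → IsClubIn (c β) β) :
    ∀ γ < B, c γ ⊆ Iio γ := by
  intro γ hγ
  rcases Ordinal.zero_or_succ_or_isSuccLimit γ with rfl | ⟨β, rfl⟩ | hγlim
  · simp [h0]
  · rw [Order.succ_eq_add_one, hsucc, singleton_subset_iff, mem_Iio]
    exact lt_add_one β
  · exact (hlim γ hγ hγlim).1

section Walk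

variable {e : Ordinal → Set Ordinal} {α β : Ordinal}

theorem walk_one : walk e α β 1 = sInf (e β ∩ Ici α) := rfl

theorem walk_succ' (i : ℕ) : walk e α β (i + 1) = walk e α (walk e α β 1) i := by
  induction i with
  | zero => rfl
  | succ i ih => exact congrArg (fun γ => sInf (e γ ∩ Ici α)) ih

theorem walk_zero_right (he : e 0 = ∅) (i : ℕ) : walk e α 0 i = 0 := by
  induction i with
  | zero => rfl
  | succ i ih => rw [walk, ih, he, empty_inter, Ordinal.sInf_empty]

theorem walk_one_lt (he : e β ⊆ Iio β) (hβ : β ≠ 0) : walk e α β 1 < β := by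
  rw [walk_one]
  rcases (e β ∩ Ici α).eq_empty_or_nonempty with hempty | hne
  · rw [hempty, Ordinal.sInf_empty]
    exact pos_iff_ne_zero.2 hβ
  · exact he (csInf_mem hne).1

end Walk

theorem exists_eventually_walk_eq {e : ℕ → Ordinal → Set Ordinal} (he : Monotone e)
    {B : Ordinal} (hB : ∀ m, ∀ γ < B, e m γ ⊆ Iio γ) (α : Ordinal) :
    ∀ β < B, ∃ w : ℕ → Ordinal, ∀ᶠ m in atTop, walk (e m) α β = w := by
  intro β
  induction β using WellFoundedLT.induction with
  | _ β IH =>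
  intro hβ
  rcases eq_or_ne β 0 with rfl | hβ0
  · exact ⟨0, .of_forall fun m => funext (walk_zero_right (by simpa using hB m 0 hβ))⟩
  set γ := sInf (⋃ m, e m β ∩ Ici α)
  have hstep : ∀ᶠ m in atTop, walk (e m) α β 1 = γ :=
    Monotone.eventually_sInf_eq_sInf_iUnion fun m m' hm => inter_subset_inter_left _ (he hm β)
  have hγβ : γ < β := by
    obtain ⟨m, hm⟩ := hstep.exists
    exact hm ▸ walk_one_lt (hB m β hβ) hβ0
  obtain ⟨w, hw⟩ := IH γ hγβ (hγβ.trans hβ)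
  refine ⟨fun | 0 => β | i + 1 => w i, ?_⟩
  filter_upwards [hstep, hw] with m hm₁ hm
  funext i
  cases i with
  | zero => rfl
  | succ i => rw [walk_succ', hm₁, hm]

theorem stmt9_general (lam : Cardinal)
    (e : ℕ → Ordinal → Set Ordinal)
    (h0 : ∀ m, e m 0 = ∅)
    (hsucc : ∀ m, ∀ β : Ordinal, e m (β + 1) = {β})
    (hlim : ∀ m, ∀ β < lam.ord, Order.IsSuccLimit β → IsClubIn (e m β) β)
    (hsub : ∀ m, ∀ γ : Ordinal, e m γ ⊆ e (m + 1) γ)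
    (α β : Ordinal) (hβ : β < lam.ord) :
    ∃ m₀ : ℕ, ∀ m, m₀ ≤ m → ∀ i : ℕ, walk (e m) α β i = walk (e m₀) α β i := by
  have he : Monotone e := monotone_nat_of_le_succ hsub
  have hIio m : ∀ γ < lam.ord, e m γ ⊆ Iio γ := subset_Iio_of_isClubIn (h0 m) (hsucc m) (hlim m)
  obtain ⟨w, hw⟩ := exists_eventually_walk_eq he hIio α β hβ
  obtain ⟨m₀, hm₀⟩ := eventually_atTop.1 hw
  exact ⟨m₀, fun m hm => congrFun ((hm₀ m hm).trans (hm₀ m₀ le_rfl).symm)⟩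

/-- for a generalized C-sequence `⟨e^m_γ : γ < λ, m < ω⟩` (with
`e^m_γ ⊆ e^{m+1}_γ`) and fixed `α < β < λ`, there is `m₀` such that for all
`m ≥ m₀` the `m`-walk from `β` to `α` coincides (step by step, hence also in
length) with the `m₀`-walk. -/
theorem stmt9 (lam : Cardinal) (hreg : lam.IsRegular)
    (hunc : Cardinal.aleph0 < lam)
    (e : ℕ → Ordinal → Set Ordinal)
    (h0 : ∀ m, e m 0 = ∅)
    (hsucc : ∀ m, ∀ β : Ordinal, e m (β + 1) = {β})
    (hlim : ∀ m, ∀ β < lam.ord, Order.IsSuccLimit β → IsClubIn (e m β) β)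
    (hsub : ∀ m, ∀ γ : Ordinal, e m γ ⊆ e (m + 1) γ)
    (α β : Ordinal) (hαβ : α < β) (hβ : β < lam.ord) :
    ∃ m₀ : ℕ, ∀ m, m₀ ≤ m → ∀ i : ℕ, walk (e m) α β i = walk (e m₀) α β i :=
  stmt9_general lam e h0 hsucc hlim hsub α β hβ
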